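/- arXiv:1409.8123 — 2 statements merged into one kernel-verified Lean document; each statement's English description precedes it below -/
import Mathlib

section
/- (Claim 2.) Let G be a finite simple graph on vertex set V and let F be a subset of E(G) such that: the graph spanned by F is triangle-free; the graph G − F is triangle-free; and no edge of G together with two edges of F spans a triangle in G. Define the auxiliary graph T whose vertex set is E(G) \ F, where two distinct edges e, f ∈ E(G) \ F are adjacent in T if and only if there exists d ∈ F such that d, e, f span a triangle in G. Then for every maximal triangle-free graph H on the vertex set V with F ⊆ E(H) ⊆ E(G), the set E(H) \ F is a maximal independent set in T. -/
/-- The three edges `d, e, f` span a triangle in `G`: there are three distinct pairwise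
adjacent vertices `x, y, z` with `{d, e, f} = {xy, yz, xz}`. -/
def SpansTriangle {V : Type*} (G : SimpleGraph V) (d e f : Sym2 V) : Prop :=
  ∃ x y z : V, x ≠ y ∧ y ≠ z ∧ x ≠ z ∧ G.Adj x y ∧ G.Adj y z ∧ G.Adj x z ∧
    ({d, e, f} : Set (Sym2 V)) = {s(x, y), s(y, z), s(x, z)}

/-- The auxiliary graph `T` on the vertex set `E(G) \ F`, where two distinct edges
`e, f ∈ E(G) \ F` are adjacent iff there is `d ∈ F` such that `d, e, f` span a triangle
in `G`. -/
def AuxGraph {V : Type*} (G : SimpleGraph V) (F : Set (Sym2 V)) :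
    SimpleGraph ↥(G.edgeSet \ F) :=
  SimpleGraph.fromRel (fun e f => ∃ d ∈ F, SpansTriangle G d e.val f.val)

/-- `I` is an independent set of the graph `T`: no two vertices of `I` are adjacent. -/
def IsIndepSet {W : Type*} (T : SimpleGraph W) (I : Set W) : Prop :=
  ∀ ⦃u⦄, u ∈ I → ∀ ⦃v⦄, v ∈ I → ¬ T.Adj u v

/-- `I` is a maximal independent set of `T`. -/
def IsMaximalIndepSet {W : Type*} (T : SimpleGraph W) (I : Set W) : Prop :=
  IsIndepSet T I ∧ ∀ v ∉ I, ¬ IsIndepSet T (insert v I)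

/-- `H` is maximal triangle-free: `H` contains no triangle, and adding any non-edge of `H`
creates a triangle. -/
def MaximalTriangleFree {V : Type*} (H : SimpleGraph V) : Prop :=
  H.CliqueFree 3 ∧ ∀ u v : V, u ≠ v → ¬ H.Adj u v →
    ¬ (H ⊔ SimpleGraph.fromEdgeSet {s(u, v)}).CliqueFree 3

lemma inner_third {V : Type*} (H : SimpleGraph V) {a b c u v : V}
    (he : s(a, b) = s(u, v)) (h1 : H.Adj a c) (h2 : H.Adj b c) :
    ∃ w, H.Adj u w ∧ H.Adj v w := by
  rw [Sym2.eq_iff] at he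
  rcases he with ⟨rfl, rfl⟩ | ⟨rfl, rfl⟩
  · exact ⟨c, h1, h2⟩
  · exact ⟨c, h2, h1⟩

lemma third_vertex {V : Type*} (H : SimpleGraph V) (h3 : H.CliqueFree 3)
    {u v : V}
    (h : ¬ (H ⊔ SimpleGraph.fromEdgeSet {s(u, v)}).CliqueFree 3) :
    ∃ w, H.Adj u w ∧ H.Adj v w := by
  classical
  rw [SimpleGraph.CliqueFree] at h
  push_neg at h
  obtain ⟨t, ht⟩ := h
  rw [SimpleGraph.is3Clique_iff] at ht
  obtain ⟨a, b, c, hab, hac, hbc, rfl⟩ := ht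
  simp only [SimpleGraph.sup_adj, SimpleGraph.fromEdgeSet_adj,
    Set.mem_singleton_iff] at hab hac hbc
  rcases hab with hab | ⟨hab, habne⟩ <;> rcases hac with hac | ⟨hac, hacne⟩ <;>
    rcases hbc with hbc | ⟨hbc, hbcne⟩
  · exact absurd (SimpleGraph.is3Clique_iff.mpr ⟨a, b, c, hab, hac, hbc, rfl⟩) (h3 _)
  · exact inner_third H hbc hab.symm hac.symm
  · exact inner_third H hac hab hbc.symm
  · exact absurd (Sym2.congr_left.mp (hac.trans hbc.symm)) hab.ne
  · exact inner_third H hab hac hbc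
  · rcases Sym2.eq_iff.mp (hab.trans hbc.symm) with ⟨h1, h2⟩ | ⟨h1, h2⟩
    · exact absurd (h1.trans h2) hac.ne
    · exact absurd h1 hac.ne
  · exact absurd (Sym2.congr_right.mp (hab.trans hac.symm)) hbc.ne
  · exact absurd (Sym2.congr_left.mp (hac.trans hbc.symm)) habne

/-- Claim 2: with `F ⊆ E(G)` such that the graph spanned by `F` is triangle-free, `G − F`
is triangle-free, and no edge of `G` together with two edges of `F` spans a triangle in
`G`, for every maximal triangle-free graph `H` with `F ⊆ E(H) ⊆ E(G)`, the set
`E(H) \ F` is a maximal independent set in the auxiliary graph `T`. -/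
theorem edges_maximal_indep_in_aux {V : Type*} [Fintype V] (G : SimpleGraph V)
    (F : Set (Sym2 V)) (hF : F ⊆ G.edgeSet)
    (hF_tf : (SimpleGraph.fromEdgeSet F).CliqueFree 3)
    (hGF_tf : (G.deleteEdges F).CliqueFree 3)
    (hMixed : ∀ e ∈ G.edgeSet, ∀ d₁ ∈ F, ∀ d₂ ∈ F, ¬ SpansTriangle G e d₁ d₂)
    (H : SimpleGraph V) (hH : MaximalTriangleFree H)
    (hFH : F ⊆ H.edgeSet) (hHG : H.edgeSet ⊆ G.edgeSet) :
    IsMaximalIndepSet (AuxGraph G F) {e : ↥(G.edgeSet \ F) | e.val ∈ H.edgeSet} := by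

  classical
  constructor
  · -- independence
    rintro e he f hf hadj
    rw [AuxGraph, SimpleGraph.fromRel_adj] at hadj
    obtain ⟨hne, hrel⟩ := hadj
    have key : ∀ (p q : ↥(G.edgeSet \ F)), p.val ∈ H.edgeSet → q.val ∈ H.edgeSet →
        (∃ d ∈ F, SpansTriangle G d p.val q.val) → False := by
      rintro p q hp hq ⟨d, hdF, x, y, z, hxy, hyz, hxz, _, _, _, hset⟩
      have hmem : ∀ s ∈ ({s(x, y), s(y, z), s(x, z)} : Set (Sym2 V)), s ∈ H.edgeSet := by
        intro s hs
        rw [← hset] at hs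
        rcases hs with rfl | rfl | rfl
        · exact hFH hdF
        · exact hp
        · exact hq
      have h1 : H.Adj x y := hmem s(x, y) (by simp)
      have h2 : H.Adj y z := hmem s(y, z) (by simp)
      have h3 : H.Adj x z := hmem s(x, z) (by simp)
      exact hH.1 _ (SimpleGraph.is3Clique_iff.mpr ⟨x, y, z, h1, h3, h2, rfl⟩)
    rcases hrel with hrel | hrel
    · exact key e f he hf hrel
    · exact key f e hf he hrel
  · -- maximality
    rintro v hv hind
    obtain ⟨hvG, hvF⟩ := v.property
    obtain ⟨a, b, hab⟩ : ∃ a b, (v : Sym2 V) = s(a, b) := by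
      obtain ⟨⟨a, b⟩, h⟩ := Quot.exists_rep (v : Sym2 V)
      exact ⟨a, b, h.symm⟩
    have hGab : G.Adj a b := by rw [← SimpleGraph.mem_edgeSet, ← hab]; exact hvG
    have hnab : a ≠ b := hGab.ne
    have hnH : ¬ H.Adj a b := fun h => hv (by rw [Set.mem_setOf_eq, hab]; exact h)
    obtain ⟨w, hw1, hw2⟩ := third_vertex H hH.1 (hH.2 a b hnab hnH)
    have hawG : s(a, w) ∈ G.edgeSet := hHG hw1
    have hbwG : s(b, w) ∈ G.edgeSet := hHG hw2
    have hGaw : G.Adj a w := G.mem_edgeSet.mp hawG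
    have hGbw : G.Adj b w := G.mem_edgeSet.mp hbwG
    by_cases haw : s(a, w) ∈ F
    · by_cases hbw : s(b, w) ∈ F
      · refine hMixed _ hvG _ haw _ hbw ⟨a, b, w, hnab, hGbw.ne, hGaw.ne,
          hGab, hGbw, hGaw, ?_⟩
        rw [hab]
        ext s
        simp only [Set.mem_insert_iff, Set.mem_singleton_iff]
        tauto
      · set f : ↥(G.edgeSet \ F) := ⟨s(b, w), hbwG, hbw⟩ with hf
        have hfI : f ∈ ({e : ↥(G.edgeSet \ F) | e.val ∈ H.edgeSet}) := hw2
        have hvf : v ≠ f := by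
          intro h
          apply hv
          rw [Set.mem_setOf_eq]
          have hve : (v : Sym2 V) = s(b, w) := by rw [h]
          rw [hve]; exact hw2
        have hadj : (AuxGraph G F).Adj v f := by
          rw [AuxGraph, SimpleGraph.fromRel_adj]
          refine ⟨hvf, Or.inl ⟨s(a, w), haw, a, b, w, hnab, hGbw.ne, hGaw.ne,
            hGab, hGbw, hGaw, ?_⟩⟩
          show ({s(a, w), (v : Sym2 V), s(b, w)} : Set (Sym2 V)) = _
          rw [hab]
          ext s
          simp only [Set.mem_insert_iff, Set.mem_singleton_iff]
          tauto
        exact hind (Set.mem_insert v _) (Set.mem_insert_of_mem _ hfI) hadj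
    · by_cases hbw : s(b, w) ∈ F
      · set f : ↥(G.edgeSet \ F) := ⟨s(a, w), hawG, haw⟩ with hf
        have hfI : f ∈ ({e : ↥(G.edgeSet \ F) | e.val ∈ H.edgeSet}) := hw1
        have hvf : v ≠ f := by
          intro h
          apply hv
          rw [Set.mem_setOf_eq]
          have hve : (v : Sym2 V) = s(a, w) := by rw [h]
          rw [hve]; exact hw1
        have hadj : (AuxGraph G F).Adj v f := by
          rw [AuxGraph, SimpleGraph.fromRel_adj]
          refine ⟨hvf, Or.inl ⟨s(b, w), hbw, a, b, w, hnab, hGbw.ne, hGaw.ne,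
            hGab, hGbw, hGaw, ?_⟩⟩
          show ({s(b, w), (v : Sym2 V), s(a, w)} : Set (Sym2 V)) = _
          rw [hab]
          ext s
          simp only [Set.mem_insert_iff, Set.mem_singleton_iff]
          tauto
        exact hind (Set.mem_insert v _) (Set.mem_insert_of_mem _ hfI) hadj
      · refine hGF_tf _ (SimpleGraph.is3Clique_iff.mpr ⟨a, b, w, ?_, ?_, ?_, rfl⟩) <;>
          rw [SimpleGraph.deleteEdges_adj]
        · exact ⟨hGab, hab ▸ hvF⟩
        · exact ⟨hGaw, haw⟩
        · exact ⟨hGbw, hbw⟩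
end

section
/- Let G be a finite simple graph on vertex set V with e(G) edges, and let F ⊆ E(G) be such that: the graph spanned by F is triangle-free; the graph G − F is triangle-free; and no edge of G together with two edges of F spans a triangle in G. Then the number of maximal triangle-free graphs H on the vertex set V with F ⊆ E(H) ⊆ E(G) is at most 2^{(e(G) − |F|)/2}, and in particular at most 2^{e(G)/2}. -/
section Aux
open Finset


variable {α : Type*}

/-- Maximal independent sets of the graph induced by `r` on `s`. -/
def MISets [DecidableEq α] (r : α → α → Prop) [DecidableRel r] (s : Finset α) :
    Finset (Finset α) :=
  s.powerset.filter (fun I => (∀ a ∈ I, ∀ b ∈ I, ¬ r a b) ∧ ∀ x ∈ s, x ∉ I → ∃ y ∈ I, r x y)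

lemma sqrt2_facts : Real.sqrt 2 ^ 2 = 2 ∧ (1:ℝ) ≤ Real.sqrt 2 ∧ (0:ℝ) < Real.sqrt 2 := by
  have h2 : Real.sqrt 2 ^ 2 = 2 := Real.sq_sqrt (by norm_num)
  have hnn : (0:ℝ) ≤ Real.sqrt 2 := Real.sqrt_nonneg 2
  refine ⟨h2, by nlinarith, by nlinarith⟩

lemma ht_numeric (d : ℕ) :
    1 + ∑ j ∈ range d, ((Real.sqrt 2)⁻¹) ^ j ≤ Real.sqrt 2 ^ (d + 1) := by
  obtain ⟨h2, h1, hpos⟩ := sqrt2_facts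
  set q : ℝ := (Real.sqrt 2)⁻¹ with hq
  have hq0 : 0 ≤ q := by positivity
  have hq1 : q ≤ 1 := by
    rw [hq]; exact inv_le_one_of_one_le₀ h1
  have hqs : q * Real.sqrt 2 = 1 := by
    rw [hq]; field_simp
  induction d with
  | zero => simpa using h1
  | succ d ih =>
    rcases Nat.eq_zero_or_pos d with rfl | hd
    · norm_num [h2]
    · have hsum : (1:ℝ) + ∑ j ∈ range (d+1), q ^ j
          = (1 + ∑ j ∈ range d, q ^ j) + q ^ d := by
        rw [Finset.sum_range_succ]; ring
      rw [hsum]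
      have hqd : q ^ d ≤ q := by
        calc q ^ d ≤ q ^ 1 := pow_le_pow_of_le_one hq0 hq1 hd
        _ = q := pow_one q
      have hbig : (2:ℝ) ≤ Real.sqrt 2 ^ (d+1) := by
        calc (2:ℝ) = Real.sqrt 2 ^ 2 := h2.symm
        _ ≤ Real.sqrt 2 ^ (d+1) := pow_le_pow_right₀ h1 (by omega)
      have hstep : Real.sqrt 2 ^ (d+2) = Real.sqrt 2 ^ (d+1) * Real.sqrt 2 := by
        rw [pow_succ]
      have : Real.sqrt 2 ^ (d+1) + q ^ d ≤ Real.sqrt 2 ^ (d+2) := by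
        rw [hstep]
        nlinarith [mul_le_mul_of_nonneg_right hbig (by nlinarith : (0:ℝ) ≤ Real.sqrt 2 - 1)]
      calc (1 + ∑ j ∈ range d, q ^ j) + q ^ d ≤ Real.sqrt 2 ^ (d+1) + q ^ d := by linarith
      _ ≤ Real.sqrt 2 ^ (d+2) := this

lemma mem_MISets [DecidableEq α] {r : α → α → Prop} [DecidableRel r] {s I : Finset α} :
    I ∈ MISets r s ↔ I ⊆ s ∧ (∀ a ∈ I, ∀ b ∈ I, ¬ r a b) ∧
      (∀ x ∈ s, x ∉ I → ∃ y ∈ I, r x y) := by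
  simp [MISets, Finset.mem_filter, Finset.mem_powerset, and_assoc]

theorem MISets_card_le [DecidableEq α] [LinearOrder α] (r : α → α → Prop) [DecidableRel r]
    (hsym : ∀ a b, r a b → r b a)
    (htf : ∀ a b c, r a b → r b c → r a c → False) :
    ∀ (n : ℕ) (s : Finset α), s.card ≤ n →
      ((MISets r s).card : ℝ) ≤ Real.sqrt 2 ^ s.card := by
  obtain ⟨h2, h1, hpos⟩ := sqrt2_facts
  have hirr : ∀ a, ¬ r a a := fun a h => htf a a a h h h
  have hempty : ∀ s : Finset α, s = ∅ → ((MISets r s).card : ℝ) ≤ Real.sqrt 2 ^ s.card := by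
    rintro s rfl
    have hsub : MISets r ∅ ⊆ {∅} := by
      intro I hI
      have := (mem_MISets.mp hI).1
      simp only [Finset.subset_empty] at this
      simp [this]
    have := Finset.card_le_card hsub
    simp only [Finset.card_singleton] at this
    calc ((MISets r (∅ : Finset α)).card : ℝ) ≤ 1 := by exact_mod_cast this
    _ ≤ _ := by simp
  intro n
  induction n with
  | zero =>
    intro s hs
    exact hempty s (Finset.card_eq_zero.mp (Nat.le_zero.mp hs))
  | succ n ih =>
    intro s hs
    rcases s.eq_empty_or_nonempty with rfl | hne
    · exact hempty _ rfl
    obtain ⟨u, hu, hmin⟩ := s.exists_min_image (fun v => (s.filter (fun x => r v x)).card) hne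
    set q : ℝ := (Real.sqrt 2)⁻¹ with hqdef
    have hq0 : 0 ≤ q := by positivity
    have hqs : Real.sqrt 2 * q = 1 := mul_inv_cancel₀ hpos.ne'
    set nb := s.filter (fun x => r u x) with hnbdef
    set d := nb.card with hddef
    have hunb : u ∉ nb := by simp [hnbdef, hirr u]
    have hins : insert u nb ⊆ s := Finset.insert_subset hu (Finset.filter_subset _ _)
    have hcard_ins : (insert u nb).card = d + 1 := by
      rw [Finset.card_insert_of_notMem hunb]
    have hNd : d + 1 ≤ s.card := by
      rw [← hcard_ins]; exact Finset.card_le_card hins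
    set k := s.card - (d + 1) with hkdef
    have hk : k + (d + 1) = s.card := Nat.sub_add_cancel hNd
    -- classes
    set Cu := (MISets r s).filter (fun I => u ∈ I) with hCudef
    set Cv : α → Finset (Finset α) :=
      fun v => (MISets r s).filter (fun I => u ∉ I ∧ v ∈ I ∧ ∀ w ∈ nb, w < v → w ∉ I) with hCvdef
    have hcover : MISets r s ⊆ Cu ∪ nb.biUnion Cv := by
      intro I hI
      by_cases hui : u ∈ I
      · exact Finset.mem_union_left _ (Finset.mem_filter.mpr ⟨hI, hui⟩)
      · obtain ⟨hIs, hind, hdom⟩ := mem_MISets.mp hI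
        obtain ⟨y, hyI, hry⟩ := hdom u hu hui
        have htne : (nb ∩ I).Nonempty :=
          ⟨y, Finset.mem_inter.mpr ⟨Finset.mem_filter.mpr ⟨hIs hyI, hry⟩, hyI⟩⟩
        set v := (nb ∩ I).min' htne with hvdef
        have hv := (nb ∩ I).min'_mem htne
        rw [Finset.mem_inter] at hv
        refine Finset.mem_union_right _ (Finset.mem_biUnion.mpr ⟨v, hv.1,
          Finset.mem_filter.mpr ⟨hI, hui, hv.2, ?_⟩⟩)
        intro w hw hlt hwI
        exact absurd (Finset.min'_le _ w (Finset.mem_inter.mpr ⟨hw, hwI⟩)) (not_le.mpr hlt)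
    have hsplit : ((MISets r s).card : ℝ) ≤ (Cu.card : ℝ) + ∑ v ∈ nb, ((Cv v).card : ℝ) := by
      have h1' := Finset.card_le_card hcover
      have h2' := Finset.card_union_le Cu (nb.biUnion Cv)
      have h3' := Finset.card_biUnion_le (s := nb) (t := Cv)
      push_cast
      exact_mod_cast le_trans h1' (le_trans h2' (by exact_mod_cast Nat.add_le_add_left h3' _))
    -- bound for Cu
    have hCu : ((Cu.card : ℝ)) ≤ Real.sqrt 2 ^ k := by
      set s1 := s \ insert u nb with hs1def
      have hs1card : s1.card = k := by
        rw [hs1def, Finset.card_sdiff_of_subset hins, hcard_ins]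
      have hinj : Cu.card ≤ (MISets r s1).card := by
        apply Finset.card_le_card_of_injOn (fun I => I.erase u)
        · intro I hI
          obtain ⟨hIm, huI⟩ := Finset.mem_filter.mp hI
          obtain ⟨hIs, hind, hdom⟩ := mem_MISets.mp hIm
          refine mem_MISets.mpr ⟨?_, ?_, ?_⟩
          · intro x hx
            obtain ⟨hxne, hxI⟩ := Finset.mem_erase.mp hx
            refine Finset.mem_sdiff.mpr ⟨hIs hxI, ?_⟩
            intro hxin
            rcases Finset.mem_insert.mp hxin with h | h
            · exact hxne h
            · exact hind u huI x hxI (Finset.mem_filter.mp h).2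
          · intro a ha b hb
            exact hind a (Finset.mem_of_mem_erase ha) b (Finset.mem_of_mem_erase hb)
          · intro x hxs hxI
            obtain ⟨hxs', hxin⟩ := Finset.mem_sdiff.mp hxs
            have hxI' : x ∉ I := by
              intro h
              exact hxI (Finset.mem_erase.mpr ⟨fun he => hxin (he ▸ Finset.mem_insert_self u nb), h⟩)
            obtain ⟨y, hyI, hrxy⟩ := hdom x hxs' hxI'
            have hyu : y ≠ u := by
              rintro rfl
              exact hxin (Finset.mem_insert.mpr (Or.inr
                (Finset.mem_filter.mpr ⟨hxs', hsym x y hrxy⟩)))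
            exact ⟨y, Finset.mem_erase.mpr ⟨hyu, hyI⟩, hrxy⟩
        · intro I hI J hJ h
          dsimp only at h
          have huI := (Finset.mem_filter.mp (Finset.mem_coe.mp hI)).2
          have huJ := (Finset.mem_filter.mp (Finset.mem_coe.mp hJ)).2
          rw [← Finset.insert_erase huI, h, Finset.insert_erase huJ]
      have hs1n : s1.card ≤ n := by
        have : s1 ⊆ s.erase u := by
          intro x hx
          obtain ⟨hxs, hxin⟩ := Finset.mem_sdiff.mp hx
          exact Finset.mem_erase.mpr ⟨fun he => hxin (he ▸ Finset.mem_insert_self u nb), hxs⟩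
        have := Finset.card_le_card this
        rw [Finset.card_erase_of_mem hu] at this
        omega
      calc ((Cu.card : ℝ)) ≤ ((MISets r s1).card : ℝ) := by exact_mod_cast hinj
      _ ≤ Real.sqrt 2 ^ s1.card := ih s1 hs1n
      _ = Real.sqrt 2 ^ k := by rw [hs1card]
    -- bound for each Cv
    set pre : α → Finset α := fun v => nb.filter (fun w => w < v) with hpredef
    have hCv : ∀ v ∈ nb, ((Cv v).card : ℝ) ≤ Real.sqrt 2 ^ k * q ^ (pre v).card := by
      intro v hv
      have hvs : v ∈ s := (Finset.filter_subset _ _) hv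
      have hruv : r u v := (Finset.mem_filter.mp hv).2
      set rv := s.filter (fun x => r v x) with hrvdef
      set Rv := insert v (rv ∪ pre v) with hRvdef
      set s2 := s \ Rv with hs2def
      have hvRv : v ∉ rv ∪ pre v := by
        intro h
        rcases Finset.mem_union.mp h with h | h
        · exact hirr v (Finset.mem_filter.mp h).2
        · exact lt_irrefl v (Finset.mem_filter.mp h).2
      have hdisj : Disjoint rv (pre v) := by
        rw [Finset.disjoint_left]
        intro x hx hx'
        have hx1 : r v x := (Finset.mem_filter.mp hx).2
        have hx2 : r u x := (Finset.mem_filter.mp (Finset.mem_filter.mp hx').1).2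
        exact htf u v x hruv hx1 hx2
      have hRvsub : Rv ⊆ s := by
        rw [hRvdef]
        refine Finset.insert_subset hvs (Finset.union_subset (Finset.filter_subset _ _) ?_)
        exact (Finset.filter_subset _ _).trans (Finset.filter_subset _ _)
      have hdrv : d ≤ rv.card := hmin v hvs
      have hRvcard : 1 + d + (pre v).card ≤ Rv.card := by
        rw [hRvdef, Finset.card_insert_of_notMem hvRv, Finset.card_union_of_disjoint hdisj]
        omega
      have hs2card : s2.card + Rv.card = s.card := by
        rw [hs2def, Finset.card_sdiff_of_subset hRvsub]
        have := Finset.card_le_card hRvsub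
        omega
      have hinj : (Cv v).card ≤ (MISets r s2).card := by
        apply Finset.card_le_card_of_injOn (fun I => I.erase v)
        · intro I hI
          obtain ⟨hIm, huI, hvI, hpreI⟩ := Finset.mem_filter.mp hI
          obtain ⟨hIs, hind, hdom⟩ := mem_MISets.mp hIm
          refine mem_MISets.mpr ⟨?_, ?_, ?_⟩
          · intro x hx
            obtain ⟨hxne, hxI⟩ := Finset.mem_erase.mp hx
            refine Finset.mem_sdiff.mpr ⟨hIs hxI, ?_⟩
            intro hxin
            rcases Finset.mem_insert.mp hxin with h | h
            · exact hxne h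
            rcases Finset.mem_union.mp h with h | h
            · exact hind v hvI x hxI (Finset.mem_filter.mp h).2
            · obtain ⟨hxnb, hxlt⟩ := Finset.mem_filter.mp h
              exact hpreI x hxnb hxlt hxI
          · intro a ha b hb
            exact hind a (Finset.mem_of_mem_erase ha) b (Finset.mem_of_mem_erase hb)
          · intro x hxs hxI
            obtain ⟨hxs', hxin⟩ := Finset.mem_sdiff.mp hxs
            have hxI' : x ∉ I := fun h => hxI (Finset.mem_erase.mpr
              ⟨fun he => hxin (he ▸ Finset.mem_insert_self v _), h⟩)
            obtain ⟨y, hyI, hrxy⟩ := hdom x hxs' hxI'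
            have hyv : y ≠ v := by
              rintro rfl
              exact hxin (Finset.mem_insert.mpr (Or.inr (Finset.mem_union_left _
                (Finset.mem_filter.mpr ⟨hxs', hsym x y hrxy⟩))))
            exact ⟨y, Finset.mem_erase.mpr ⟨hyv, hyI⟩, hrxy⟩
        · intro I hI J hJ h
          dsimp only at h
          have hvI := (Finset.mem_filter.mp (Finset.mem_coe.mp hI)).2.2.1
          have hvJ := (Finset.mem_filter.mp (Finset.mem_coe.mp hJ)).2.2.1
          rw [← Finset.insert_erase hvI, h, Finset.insert_erase hvJ]
      have hs2n : s2.card ≤ n := by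
        have hsub2 : s2 ⊆ s.erase v := fun x hx => Finset.mem_erase.mpr
          ⟨fun he => (Finset.mem_sdiff.mp hx).2 (he ▸ Finset.mem_insert_self v _),
            (Finset.mem_sdiff.mp hx).1⟩
        have := Finset.card_le_card hsub2
        rw [Finset.card_erase_of_mem hvs] at this
        omega
      have hexp : s2.card + (pre v).card ≤ k := by omega
      have hstep1 : Real.sqrt 2 ^ s2.card * Real.sqrt 2 ^ (pre v).card ≤ Real.sqrt 2 ^ k := by
        rw [← pow_add]
        exact pow_le_pow_right₀ h1 hexp
      have hcancel : Real.sqrt 2 ^ (pre v).card * q ^ (pre v).card = 1 := by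
        rw [← mul_pow, hqs, one_pow]
      calc ((Cv v).card : ℝ) ≤ ((MISets r s2).card : ℝ) := by exact_mod_cast hinj
      _ ≤ Real.sqrt 2 ^ s2.card := ih s2 hs2n
      _ = Real.sqrt 2 ^ s2.card * (Real.sqrt 2 ^ (pre v).card * q ^ (pre v).card) := by
            rw [hcancel, mul_one]
      _ = (Real.sqrt 2 ^ s2.card * Real.sqrt 2 ^ (pre v).card) * q ^ (pre v).card := by ring
      _ ≤ Real.sqrt 2 ^ k * q ^ (pre v).card :=
            mul_le_mul_of_nonneg_right hstep1 (pow_nonneg hq0 _)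
    have hsum2 : ∑ v ∈ nb, q ^ (pre v).card ≤ ∑ j ∈ Finset.range d, q ^ j := by
      have hmono : ∀ x ∈ nb, ∀ y ∈ nb, x < y → (pre x).card < (pre y).card := by
        intro x hx y hy hxy
        apply Finset.card_lt_card
        constructor
        · intro w hw
          obtain ⟨hwnb, hwlt⟩ := Finset.mem_filter.mp hw
          exact Finset.mem_filter.mpr ⟨hwnb, hwlt.trans hxy⟩
        · intro hsub
          have : x ∈ pre x := hsub (Finset.mem_filter.mpr ⟨hx, hxy⟩)
          exact lt_irrefl x (Finset.mem_filter.mp this).2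
      have hiinj : ∀ x ∈ nb, ∀ y ∈ nb, (pre x).card = (pre y).card → x = y := by
        intro x hx y hy h
        rcases lt_trichotomy x y with hlt | heq | hlt
        · exact absurd h (Nat.ne_of_lt (hmono x hx y hy hlt))
        · exact heq
        · exact absurd h.symm (Nat.ne_of_lt (hmono y hy x hx hlt))
      calc ∑ v ∈ nb, q ^ (pre v).card
          = ∑ j ∈ nb.image (fun v => (pre v).card), q ^ j := (Finset.sum_image hiinj).symm
      _ ≤ ∑ j ∈ Finset.range d, q ^ j := by
          apply Finset.sum_le_sum_of_subset_of_nonneg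
          · intro j hj
            obtain ⟨v, hv, rfl⟩ := Finset.mem_image.mp hj
            refine Finset.mem_range.mpr (Finset.card_lt_card ?_)
            constructor
            · exact Finset.filter_subset _ _
            · intro hsub
              have : v ∈ pre v := hsub hv
              exact lt_irrefl v (Finset.mem_filter.mp this).2
          · intro j _ _
            positivity
    have hsB : ∑ v ∈ nb, ((Cv v).card : ℝ) ≤ Real.sqrt 2 ^ k * ∑ v ∈ nb, q ^ (pre v).card := by
      rw [Finset.mul_sum]
      exact Finset.sum_le_sum hCv
    have hposk : (0:ℝ) ≤ Real.sqrt 2 ^ k := le_of_lt (pow_pos hpos k)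
    calc ((MISets r s).card : ℝ) ≤ (Cu.card : ℝ) + ∑ v ∈ nb, ((Cv v).card : ℝ) := hsplit
    _ ≤ Real.sqrt 2 ^ k + Real.sqrt 2 ^ k * ∑ v ∈ nb, q ^ (pre v).card := add_le_add hCu hsB
    _ ≤ Real.sqrt 2 ^ k + Real.sqrt 2 ^ k * ∑ j ∈ Finset.range d, q ^ j := by
        have := mul_le_mul_of_nonneg_left hsum2 hposk
        linarith
    _ = Real.sqrt 2 ^ k * (1 + ∑ j ∈ Finset.range d, q ^ j) := by ring
    _ ≤ Real.sqrt 2 ^ k * Real.sqrt 2 ^ (d+1) := by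
        have hnum := ht_numeric d
        rw [hqdef]
        exact mul_le_mul_of_nonneg_left hnum hposk
    _ = Real.sqrt 2 ^ (k + (d+1)) := (pow_add _ _ _).symm
    _ = Real.sqrt 2 ^ s.card := by rw [hk]

lemma span_structure {V : Type*} {G : SimpleGraph V} {a b f : Sym2 V}
    (h : SpansTriangle G a b f) :
    ∃ u v w : V, u ≠ v ∧ u ≠ w ∧ v ≠ w ∧ G.Adj u v ∧ G.Adj u w ∧ G.Adj v w ∧
      a = s(u, v) ∧ b = s(u, w) ∧ f = s(v, w) := by
  obtain ⟨x, y, z, hxy, hyz, hxz, haxy, hayz, haxz, hset⟩ := h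
  have hmem : ∀ t ∈ ({a, b, f} : Set (Sym2 V)), t = s(x,y) ∨ t = s(y,z) ∨ t = s(x,z) := by
    intro t ht
    have : t ∈ ({s(x,y), s(y,z), s(x,z)} : Set (Sym2 V)) := hset ▸ ht
    simpa using this
  have hrev : ∀ t ∈ ({s(x,y), s(y,z), s(x,z)} : Set (Sym2 V)), t = a ∨ t = b ∨ t = f := by
    intro t ht
    have : t ∈ ({a, b, f} : Set (Sym2 V)) := hset.symm ▸ ht
    simpa using this
  have e12 : s(x,y) ≠ s(y,z) := by
    intro hh
    rw [Sym2.eq_iff] at hh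
    rcases hh with (⟨h1, h2⟩ | ⟨h1, h2⟩)
    · exact hxy h1
    · exact hxz h1
  have e13 : s(x,y) ≠ s(x,z) := by
    intro hh
    rw [Sym2.eq_iff] at hh
    rcases hh with (⟨h1, h2⟩ | ⟨h1, h2⟩)
    · exact hyz h2
    · exact hxz h1
  have e23 : s(y,z) ≠ s(x,z) := by
    intro hh
    rw [Sym2.eq_iff] at hh
    rcases hh with (⟨h1, h2⟩ | ⟨h1, h2⟩)
    · exact hxy h1.symm
    · exact hyz h1
  have ha := hmem a (by simp)
  have hb := hmem b (by simp)
  have hf1 := hrev (s(x,y)) (by simp)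
  have hf2 := hrev (s(y,z)) (by simp)
  have hf3 := hrev (s(x,z)) (by simp)
  rcases ha with ha | ha | ha <;> rcases hb with hb | hb | hb
  · -- a = e1, b = e1 : contradiction
    exfalso
    have h2f : s(y,z) = f := by
      rcases hf2 with h | h | h
      · exact absurd (h.trans ha) (e12.symm)
      · exact absurd (h.trans hb) (e12.symm)
      · exact h
    have h3f : s(x,z) = f := by
      rcases hf3 with h | h | h
      · exact absurd (h.trans ha) (e13.symm)
      · exact absurd (h.trans hb) (e13.symm)
      · exact h
    exact e23 (h2f.trans h3f.symm)
  · -- a = e1, b = e2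
    have hf : f = s(x,z) := by
      rcases hf3 with h | h | h
      · exact absurd (h.trans ha) (e13.symm)
      · exact absurd (h.trans hb) (e23.symm)
      · exact h.symm
    exact ⟨y, x, z, fun h => hxy h.symm, hyz, hxz, haxy.symm, hayz, haxz,
      by rw [ha, Sym2.eq_swap], hb, hf⟩
  · -- a = e1, b = e3
    have hf : f = s(y,z) := by
      rcases hf2 with h | h | h
      · exact absurd (h.trans ha) (e12.symm)
      · exact absurd (h.trans hb) (e23)
      · exact h.symm
    exact ⟨x, y, z, hxy, hxz, hyz, haxy, haxz, hayz, ha, hb, hf⟩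
  · -- a = e2, b = e1
    have hf : f = s(x,z) := by
      rcases hf3 with h | h | h
      · exact absurd (h.trans ha) (e23.symm)
      · exact absurd (h.trans hb) (e13.symm)
      · exact h.symm
    exact ⟨y, z, x, hyz, fun h => hxy h.symm, fun h => hxz h.symm,
      hayz, haxy.symm, haxz.symm,
      ha, by rw [hb, Sym2.eq_swap], by rw [hf, Sym2.eq_swap]⟩
  · -- a = e2, b = e2 : contradiction
    exfalso
    have h1f : s(x,y) = f := by
      rcases hf1 with h | h | h
      · exact absurd (h.trans ha) (e12)
      · exact absurd (h.trans hb) (e12)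
      · exact h
    have h3f : s(x,z) = f := by
      rcases hf3 with h | h | h
      · exact absurd (h.trans ha) (e23.symm)
      · exact absurd (h.trans hb) (e23.symm)
      · exact h
    exact e13 (h1f.trans h3f.symm)
  · -- a = e2, b = e3
    have hf : f = s(x,y) := by
      rcases hf1 with h | h | h
      · exact absurd (h.trans ha) (e12)
      · exact absurd (h.trans hb) (e13)
      · exact h.symm
    exact ⟨z, y, x, fun h => hyz h.symm, fun h => hxz h.symm, fun h => hxy h.symm,
      hayz.symm, haxz.symm, haxy.symm,
      by rw [ha, Sym2.eq_swap], by rw [hb, Sym2.eq_swap], by rw [hf, Sym2.eq_swap]⟩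
  · -- a = e3, b = e1
    have hf : f = s(y,z) := by
      rcases hf2 with h | h | h
      · exact absurd (h.trans ha) (e23)
      · exact absurd (h.trans hb) (e12.symm)
      · exact h.symm
    exact ⟨x, z, y, hxz, hxy, fun h => hyz h.symm, haxz, haxy, hayz.symm,
      ha, hb, by rw [hf, Sym2.eq_swap]⟩
  · -- a = e3, b = e2
    have hf : f = s(x,y) := by
      rcases hf1 with h | h | h
      · exact absurd (h.trans ha) (e13)
      · exact absurd (h.trans hb) (e12)
      · exact h.symm
    exact ⟨z, x, y, fun h => hxz h.symm, fun h => hyz h.symm, hxy,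
      haxz.symm, hayz.symm, haxy,
      by rw [ha, Sym2.eq_swap], by rw [hb, Sym2.eq_swap], hf⟩
  · -- a = e3, b = e3 : contradiction
    exfalso
    have h1f : s(x,y) = f := by
      rcases hf1 with h | h | h
      · exact absurd (h.trans ha) (e13)
      · exact absurd (h.trans hb) (e13)
      · exact h
    have h2f : s(y,z) = f := by
      rcases hf2 with h | h | h
      · exact absurd (h.trans ha) (e23)
      · exact absurd (h.trans hb) (e23)
      · exact h
    exact e12 (h1f.trans h2f.symm)

lemma r_triangle_free {V : Type*} {G : SimpleGraph V} {F : Set (Sym2 V)}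
    (hF_tf : (SimpleGraph.fromEdgeSet F).CliqueFree 3) :
    ∀ a b c : Sym2 V,
      (a ∉ F ∧ b ∉ F ∧ ∃ f ∈ F, SpansTriangle G a b f) →
      (b ∉ F ∧ c ∉ F ∧ ∃ f ∈ F, SpansTriangle G b c f) →
      (a ∉ F ∧ c ∉ F ∧ ∃ f ∈ F, SpansTriangle G a c f) → False := by
  classical
  rintro a b c ⟨haF, hbF, f1, hf1, hs1⟩ ⟨-, hcF, f2, hf2, hs2⟩ ⟨-, -, f3, hf3, hs3⟩
  obtain ⟨u1, v1, w1, hu1v1, hu1w1, hv1w1, _, _, _, ha1, hb1, hf1e⟩ := span_structure hs1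
  obtain ⟨u2, v2, w2, hu2v2, hu2w2, hv2w2, _, _, _, hb2, hc2, hf2e⟩ := span_structure hs2
  obtain ⟨u3, v3, w3, hu3v3, hu3w3, hv3w3, _, _, _, ha3, hc3, hf3e⟩ := span_structure hs3
  have hbb : s(u1,w1) = s(u2,v2) := hb1.symm.trans hb2
  have haa : s(u1,v1) = s(u3,v3) := ha1.symm.trans ha3
  have hcc : s(u2,w2) = s(u3,w3) := hc2.symm.trans hc3
  rw [Sym2.eq_iff] at hbb haa hcc
  rcases hbb with ⟨hB1, hB2⟩ | ⟨hB1, hB2⟩ <;>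
    rcases haa with ⟨hA1, hA2⟩ | ⟨hA1, hA2⟩ <;>
    rcases hcc with ⟨hC1, hC2⟩ | ⟨hC1, hC2⟩
  · -- star case: F-triangle on v1, w1, w2
    apply hF_tf {v1, w1, w2}
    rw [SimpleGraph.is3Clique_triple_iff]
    refine ⟨?_, ?_, ?_⟩ <;> rw [SimpleGraph.fromEdgeSet_adj]
    · exact ⟨hf1e ▸ hf1, hv1w1⟩
    · constructor
      · have : s(v1, w2) = f3 := by rw [hf3e, ← hA2, ← hC2]
        rw [this]; exact hf3
      · intro h; exact hv3w3 (by rw [← hA2, ← hC2, h])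
    · constructor
      · have : s(w1, w2) = f2 := by rw [hf2e, ← hB2]
        rw [this]; exact hf2
      · intro h; exact hv2w2 (by rw [← hB2, h])
  · exact hu3w3 (by rw [← hA1, hB1, hC1])
  · exact hu1v1 (by rw [hB1, hC1, ← hA2])
  · exact hv3w3 (by rw [← hA1, hB1, hC1])
  · exact hu1w1 (by rw [hA1, ← hC1, ← hB2])
  · exact hv2w2 (by rw [← hB1, hA1, ← hC2])
  · exact hv1w1 (by rw [hA2, ← hC1, ← hB2])
  · apply hcF
    have : c = s(v1, w1) := by rw [hc3, ← hA2, ← hC1, ← hB2]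
    rw [this, ← hf1e]
    exact hf1

end Aux

/-- With `F ⊆ E(G)` such that the graph spanned by `F` is triangle-free, `G − F` is
triangle-free and no edge of `G` together with two edges of `F` spans a triangle in `G`,
the number of maximal triangle-free graphs `H` with `F ⊆ E(H) ⊆ E(G)` is at most
`2 ^ ((e(G) − |F|)/2)`, and in particular at most `2 ^ (e(G)/2)`. -/
theorem count_maximal_tf_between {V : Type*} [Fintype V] (G : SimpleGraph V)
    (F : Set (Sym2 V)) (hF : F ⊆ G.edgeSet)
    (hF_tf : (SimpleGraph.fromEdgeSet F).CliqueFree 3)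
    (hGF_tf : (G.deleteEdges F).CliqueFree 3)
    (hMixed : ∀ e ∈ G.edgeSet, ∀ d₁ ∈ F, ∀ d₂ ∈ F, ¬ SpansTriangle G e d₁ d₂) :
    (Nat.card {H : SimpleGraph V //
        MaximalTriangleFree H ∧ F ⊆ H.edgeSet ∧ H.edgeSet ⊆ G.edgeSet} : ℝ)
      ≤ 2 ^ (((Nat.card G.edgeSet : ℝ) - (Nat.card F : ℝ)) / 2) ∧
    (Nat.card {H : SimpleGraph V //
        MaximalTriangleFree H ∧ F ⊆ H.edgeSet ∧ H.edgeSet ⊆ G.edgeSet} : ℝ)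
      ≤ 2 ^ ((Nat.card G.edgeSet : ℝ) / 2) := by
  classical
  letI : LinearOrder (Sym2 V) := LinearOrder.lift' (Fintype.equivFin (Sym2 V)) (Equiv.injective _)
  set r : Sym2 V → Sym2 V → Prop :=
    fun a b => a ∉ F ∧ b ∉ F ∧ ∃ f ∈ F, SpansTriangle G a b f with hrdef
  haveI : DecidableRel r := fun a b => Classical.dec _
  have hsym : ∀ a b, r a b → r b a := by
    rintro a b ⟨ha, hb, f, hf, x, y, z, h1, h2, h3, h4, h5, h6, hset⟩
    exact ⟨hb, ha, f, hf, x, y, z, h1, h2, h3, h4, h5, h6,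
      by rw [← hset, Set.insert_comm]⟩
  have htf : ∀ a b c, r a b → r b c → r a c → False := r_triangle_free hF_tf
  have hfin : (G.edgeSet \ F).Finite := Set.toFinite _
  set sF : Finset (Sym2 V) := hfin.toFinset with hsFdef
  -- the injection
  set P : SimpleGraph V → Prop :=
    fun H => MaximalTriangleFree H ∧ F ⊆ H.edgeSet ∧ H.edgeSet ⊆ G.edgeSet with hPdef
  have hmemMIS : ∀ H : {H : SimpleGraph V // P H},
      ((H.1.edgeSet \ F).toFinite.toFinset) ∈ MISets r sF := by
    rintro ⟨H, ⟨hHtf, hHmax⟩, hFH, hHG⟩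
    refine mem_MISets.mpr ⟨?_, ?_, ?_⟩
    · intro e he
      rw [Set.Finite.mem_toFinset] at he ⊢
      exact ⟨hHG he.1, he.2⟩
    · -- independence
      intro d hd e' he' hre
      rw [Set.Finite.mem_toFinset] at hd he'
      obtain ⟨hdF, heF', f, hfF, hspan⟩ := hre
      obtain ⟨u, v, w, huv, huw, hvw, -, -, -, hde, hee, hfe⟩ := span_structure hspan
      apply hHtf {u, v, w}
      rw [SimpleGraph.is3Clique_triple_iff]
      refine ⟨?_, ?_, ?_⟩ <;> rw [← SimpleGraph.mem_edgeSet]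
      · exact hde ▸ hd.1
      · exact hee ▸ he'.1
      · exact hfe ▸ hFH hfF
    · -- domination
      intro e
      induction e using Sym2.ind with
      | _ x y =>
        intro he heI
        rw [Set.Finite.mem_toFinset] at he
        obtain ⟨heG, heF⟩ := he
        have hxyG : G.Adj x y := G.mem_edgeSet.mp heG
        have hne : x ≠ y := hxyG.ne
        have heH : s(x, y) ∉ H.edgeSet := by
          intro h
          exact heI (by rw [Set.Finite.mem_toFinset]; exact ⟨h, heF⟩)
        have hnadj : ¬ H.Adj x y := fun h => heH (H.mem_edgeSet.mpr h)
        have hkey : ∀ w : V, H.Adj x w → H.Adj y w →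
            ∃ z ∈ (H.edgeSet \ F).toFinite.toFinset, r s(x, y) z := by
          intro w hxw hyw
          have hxwG : G.Adj x w := G.mem_edgeSet.mp (hHG (H.mem_edgeSet.mpr hxw))
          have hywG : G.Adj y w := G.mem_edgeSet.mp (hHG (H.mem_edgeSet.mpr hyw))
          have hspan1 : SpansTriangle G s(x,y) s(x,w) s(y,w) := by
            refine ⟨x, y, w, hne, hyw.ne, hxw.ne, hxyG, hywG, hxwG, ?_⟩
            rw [Set.pair_comm (s(x,w)) (s(y,w))]
          have hspan2 : SpansTriangle G s(x,y) s(y,w) s(x,w) :=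
            ⟨x, y, w, hne, hyw.ne, hxw.ne, hxyG, hywG, hxwG, rfl⟩
          by_cases hxwF : s(x, w) ∈ F
          · by_cases hywF : s(y, w) ∈ F
            · exact absurd hspan1 (hMixed (s(x,y)) heG (s(x,w)) hxwF (s(y,w)) hywF)
            · refine ⟨s(y, w), ?_, heF, hywF, s(x, w), hxwF, hspan2⟩
              rw [Set.Finite.mem_toFinset]
              exact ⟨H.mem_edgeSet.mpr hyw, hywF⟩
          · refine ⟨s(x, w), ?_, heF, hxwF, ?_⟩
            · rw [Set.Finite.mem_toFinset]
              exact ⟨H.mem_edgeSet.mpr hxw, hxwF⟩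
            · by_cases hywF : s(y, w) ∈ F
              · exact ⟨s(y, w), hywF, hspan1⟩
              · exfalso
                apply hGF_tf {x, y, w}
                rw [SimpleGraph.is3Clique_triple_iff]
                refine ⟨?_, ?_, ?_⟩ <;> rw [SimpleGraph.deleteEdges_adj]
                · exact ⟨hxyG, heF⟩
                · exact ⟨hxwG, hxwF⟩
                · exact ⟨hywG, hywF⟩
        -- use maximality of H
        have hncf := hHmax x y hne hnadj
        rw [SimpleGraph.CliqueFree] at hncf
        push_neg at hncf
        obtain ⟨t, ht⟩ := hncf
        obtain ⟨p, q', w, hpq, hpw, hqw, rfl⟩ := Finset.card_eq_three.mp ht.card_eq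
        have hadj := SimpleGraph.is3Clique_triple_iff.mp ht
        obtain ⟨h1, h2, h3⟩ := hadj
        simp only [SimpleGraph.sup_adj, SimpleGraph.fromEdgeSet_adj,
          Set.mem_singleton_iff] at h1 h2 h3
        have hclique : ¬ (H.Adj p q' ∧ H.Adj p w ∧ H.Adj q' w) := by
          rintro ⟨a1, a2, a3⟩
          exact hHtf {p, q', w} (SimpleGraph.is3Clique_triple_iff.mpr ⟨a1, a2, a3⟩)
        rcases h1 with h1 | ⟨h1, -⟩ <;> rcases h2 with h2 | ⟨h2, -⟩ <;>
          rcases h3 with h3 | ⟨h3, -⟩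
        · exact absurd ⟨h1, h2, h3⟩ hclique
        · -- q' w is the new edge: third vertex p
          rcases Sym2.eq_iff.mp h3 with ⟨rfl, rfl⟩ | ⟨rfl, rfl⟩
          · exact hkey p h1.symm h2.symm
          · exact hkey p h2.symm h1.symm
        · -- p w new edge, third q'
          rcases Sym2.eq_iff.mp h2 with ⟨rfl, rfl⟩ | ⟨rfl, rfl⟩
          · exact hkey q' h1 h3.symm
          · exact hkey q' h3.symm h1
        · -- both p w and q' w new : contradiction
          exfalso
          have heq : s(p, w) = s(q', w) := h2.trans h3.symm
          rcases Sym2.eq_iff.mp heq with ⟨h, -⟩ | ⟨h, -⟩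
          · exact hpq h
          · exact hpw h
        · -- p q' new, third w
          rcases Sym2.eq_iff.mp h1 with ⟨rfl, rfl⟩ | ⟨rfl, rfl⟩
          · exact hkey w h2 h3
          · exact hkey w h3 h2
        · exfalso
          have heq : s(p, q') = s(q', w) := h1.trans h3.symm
          rcases Sym2.eq_iff.mp heq with ⟨h, -⟩ | ⟨h, -⟩
          · exact hpq h
          · exact hpw h
        · exfalso
          have heq : s(p, q') = s(p, w) := h1.trans h2.symm
          rcases Sym2.eq_iff.mp heq with ⟨-, hh⟩ | ⟨h, -⟩
          · exact hqw hh
          · exact hpw h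
        · exfalso
          have heq : s(p, q') = s(p, w) := h1.trans h2.symm
          rcases Sym2.eq_iff.mp heq with ⟨-, hh⟩ | ⟨h, -⟩
          · exact hqw hh
          · exact hpw h
  -- injectivity
  have hinj : Function.Injective
      (fun H : {H : SimpleGraph V // P H} =>
        (⟨(H.1.edgeSet \ F).toFinite.toFinset, hmemMIS H⟩ :
          {I : Finset (Sym2 V) // I ∈ MISets r sF})) := by
    rintro ⟨H, hH⟩ ⟨H', hH'⟩ h
    simp only [Subtype.mk.injEq] at h ⊢
    have hs : H.edgeSet \ F = H'.edgeSet \ F := by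
      rw [← Set.Finite.coe_toFinset (H.edgeSet \ F).toFinite, h,
        Set.Finite.coe_toFinset]
    apply SimpleGraph.edgeSet_inj.mp
    have h1 : H.edgeSet = F ∪ (H.edgeSet \ F) := by
      rw [Set.union_diff_cancel hH.2.1]
    have h2 : H'.edgeSet = F ∪ (H'.edgeSet \ F) := by
      rw [Set.union_diff_cancel hH'.2.1]
    rw [h1, h2, hs]
  have hcount : (Nat.card {H : SimpleGraph V // P H} : ℝ) ≤ Real.sqrt 2 ^ sF.card := by
    have h1 : Nat.card {H : SimpleGraph V // P H}
        ≤ Nat.card {I : Finset (Sym2 V) // I ∈ MISets r sF} :=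
      Nat.card_le_card_of_injective _ hinj
    have h2 : Nat.card {I : Finset (Sym2 V) // I ∈ MISets r sF} = (MISets r sF).card :=
      Nat.card_eq_finsetCard _
    calc (Nat.card {H : SimpleGraph V // P H} : ℝ)
        ≤ ((MISets r sF).card : ℝ) := by exact_mod_cast h1.trans h2.le
    _ ≤ Real.sqrt 2 ^ sF.card := MISets_card_le r hsym htf sF.card sF le_rfl
  -- cardinal arithmetic
  have hGfin : G.edgeSet.Finite := Set.toFinite _
  have hFfin : F.Finite := Set.toFinite _
  have hmE : Nat.card G.edgeSet = G.edgeSet.ncard := Nat.card_coe_set_eq _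
  have hmF : Nat.card F = F.ncard := Nat.card_coe_set_eq _
  have hFle : F.ncard ≤ G.edgeSet.ncard := Set.ncard_le_ncard hF hGfin
  have hsFcard : sF.card = G.edgeSet.ncard - F.ncard := by
    rw [hsFdef, ← Set.ncard_eq_toFinset_card _ hfin, Set.ncard_diff hF hFfin]
  have hpow : ∀ k : ℕ, Real.sqrt 2 ^ k = (2 : ℝ) ^ ((k : ℝ) / 2) := by
    intro k
    rw [Real.sqrt_eq_rpow, ← Real.rpow_natCast ((2:ℝ) ^ ((1:ℝ)/2)) k,
      ← Real.rpow_mul (by norm_num : (0:ℝ) ≤ 2)]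
    congr 1
    ring
  have hcast : ((sF.card : ℕ) : ℝ) = (Nat.card G.edgeSet : ℝ) - (Nat.card F : ℝ) := by
    rw [hsFcard, hmE, hmF]
    push_cast [Nat.cast_sub hFle]
    ring
  have hfirst : (Nat.card {H : SimpleGraph V // P H} : ℝ)
      ≤ 2 ^ (((Nat.card G.edgeSet : ℝ) - (Nat.card F : ℝ)) / 2) := by
    calc (Nat.card {H : SimpleGraph V // P H} : ℝ) ≤ Real.sqrt 2 ^ sF.card := hcount
    _ = (2 : ℝ) ^ ((sF.card : ℝ) / 2) := hpow sF.card
    _ = 2 ^ (((Nat.card G.edgeSet : ℝ) - (Nat.card F : ℝ)) / 2) := by rw [hcast]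
  refine ⟨hfirst, hfirst.trans ?_⟩
  apply Real.rpow_le_rpow_of_exponent_le one_le_two
  have : (0:ℝ) ≤ (Nat.card F : ℝ) := Nat.cast_nonneg _
  linarith
end
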